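/- arXiv:1502.01187 — 3 statements merged into one kernel-verified Lean document; each statement's English description precedes it below -/
import Mathlib

section
/- Let d ≥ 2 and n ≥ 3. Let f : Fin d → Fin d → Fin d → Fin d be a local rule that is not balanced, i.e. there exists a state s ∈ Fin d such that the number of triples (x,y,z) ∈ (Fin d)³ with f x y z = s is not equal to d². Then the global map F : (ZMod n → Fin d) → (ZMod n → Fin d) of the n-cell periodic-boundary CA, defined by F(c)(i) = f (c(i−1)) (c(i)) (c(i+1)), is not bijective. -/
/-!
Count the configurations `c` with `F c 0 = s` in two ways. Since `F` is a bijection, they are as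
many as the configurations `e` with `e 0 = s`, namely `d ^ (n - 1)`. On the other hand `F c 0` only
depends on the window `(c (-1), c 0, c 1)` of three distinct cells (this is where `3 ≤ n` enters),
and every window is shared by exactly `d ^ (n - 3)` configurations; so their number is also
`#f⁻¹(s) * d ^ (n - 3)`, which forces `#f⁻¹(s) = d ^ 2`.
-/

open Finset Function

section Fibres

variable {α γ : Type*} [Fintype α] [DecidableEq γ]

theorem card_filter_mem_eq_mul_of_card_fiber (p : α → γ) {m : ℕ}
    (hp : ∀ y, #{a | p a = y} = m) (t : Finset γ) : #{a | p a ∈ t} = #t * m := by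
  rw [← sum_card_fiberwise_eq_card_filter, sum_const_nat fun y _ => hp y]

theorem card_filter_eq_one_of_bijective {p : α → γ} (hp : Bijective p) (y : γ) :
    #{a | p a = y} = 1 := by
  obtain ⟨x, rfl⟩ := hp.surjective y
  exact card_eq_one.2 ⟨x, by ext; simp [hp.injective.eq_iff]⟩

end Fibres

section Functions

variable {ι β : Type*} [Fintype ι] [DecidableEq ι] [Fintype β] [DecidableEq β]

theorem card_filter_forall_mem_eq (S : Finset ι) (g : ι → β) :
    #{c : ι → β | ∀ i ∈ S, c i = g i} = Fintype.card β ^ (Fintype.card ι - #S) := by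
  have : ({c : ι → β | ∀ i ∈ S, c i = g i} : Finset (ι → β)) =
      Fintype.piFinset fun i => if i ∈ S then {g i} else univ := by
    ext c
    simp only [mem_filter, mem_univ, true_and, Fintype.mem_piFinset]
    refine forall_congr' fun i => ?_
    split_ifs with hi <;> simp [hi]
  rw [this, Fintype.card_piFinset]
  simp only [apply_ite card, card_singleton, card_univ]
  rw [prod_ite, prod_const_one, one_mul, prod_const, filter_not, filter_mem_eq_inter, univ_inter,
    card_sdiff_of_subset (subset_univ S), card_univ]

theorem card_filter_apply_eq (i : ι) (b : β) :
    #{c : ι → β | c i = b} = Fintype.card β ^ (Fintype.card ι - 1) := by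
  simpa using card_filter_forall_mem_eq {i} fun _ => b

theorem card_filter_apply₃_eq {i j k : ι} (hij : i ≠ j) (hik : i ≠ k) (hjk : j ≠ k)
    (t : β × β × β) :
    #{c : ι → β | (c i, c j, c k) = t} = Fintype.card β ^ (Fintype.card ι - 3) := by
  have := card_filter_forall_mem_eq {i, j, k}
    fun l => if l = i then t.1 else if l = j then t.2.1 else t.2.2
  rw [card_insert_of_notMem (by simp [hij, hik]), card_pair hjk] at this
  rw [← this]
  congr 1
  ext c
  simp [Prod.ext_iff, hij.symm, hik.symm, hjk.symm]

end Functions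

theorem stmt_0_general (d n : ℕ) (hn : 3 ≤ n)
    (f : Fin d → Fin d → Fin d → Fin d)
    (hf : ∃ s : Fin d,
      (Finset.univ.filter
        (fun t : Fin d × Fin d × Fin d => f t.1 t.2.1 t.2.2 = s)).card ≠ d ^ 2) :
    ¬ Function.Bijective
      (fun (c : ZMod n → Fin d) (i : ZMod n) => f (c (i - 1)) (c i) (c (i + 1))) := by
  intro hF
  obtain ⟨s, hs⟩ := hf
  have : Fact (2 < n) := ⟨by omega⟩
  have : Fact (1 < n) := ⟨by omega⟩
  have hd : 0 < d := s.pos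
  set F : (ZMod n → Fin d) → (ZMod n → Fin d) := fun c i => f (c (i - 1)) (c i) (c (i + 1))
  have count_image : #{c | F c 0 = s} = d ^ (n - 1) := by
    simpa [card_filter_apply_eq] using
      card_filter_mem_eq_mul_of_card_fiber F (card_filter_eq_one_of_bijective hF) {e | e 0 = s}
  have count_window :
      #{c | F c 0 = s} = #{t : Fin d × Fin d × Fin d | f t.1 t.2.1 t.2.2 = s} * d ^ (n - 3) := by
    simpa [F] using
      card_filter_mem_eq_mul_of_card_fiber (fun c : ZMod n → Fin d => (c (-1), c 0, c 1))
        (card_filter_apply₃_eq (neg_ne_zero.2 one_ne_zero) (ZMod.neg_one_ne_one (n := n))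
          zero_ne_one)
        {t | f t.1 t.2.1 t.2.2 = s}
  refine hs (Nat.eq_of_mul_eq_mul_right (pow_pos hd (n - 3)) ?_)
  rw [← count_window, count_image, ← pow_add]
  congr 1
  omega

theorem stmt_0 (d n : ℕ) (hd : 2 ≤ d) (hn : 3 ≤ n)
    (f : Fin d → Fin d → Fin d → Fin d)
    (hf : ∃ s : Fin d,
      (Finset.univ.filter
        (fun t : Fin d × Fin d × Fin d => f t.1 t.2.1 t.2.2 = s)).card ≠ d ^ 2) :
    ¬ Function.Bijective
      (fun (c : ZMod n → Fin d) (i : ZMod n) => f (c (i - 1)) (c i) (c (i + 1))) :=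
  stmt_0_general d n hn f hf
end

section
/- Let d ≥ 2 and n ≥ 3, let f : Fin d → Fin d → Fin d → Fin d be a local rule, and suppose the global map F of the n-cell periodic-boundary CA is bijective. Then for every m with 1 ≤ m ≤ n−2 and every word w : Fin m → Fin d, the number of words x : Fin (m+2) → Fin d satisfying f (x j) (x (j+1)) (x (j+2)) = w j for all j < m is exactly d². -/
lemma card_fixed_on {α β γ : Type*} [Fintype α] [Fintype β] [DecidableEq β] [Fintype γ] [DecidableEq γ]
    (g : α → β) (hg : Function.Injective g) (w : α → γ) :
    Fintype.card {y : β → γ // ∀ a, y (g a) = w a} =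
      Fintype.card γ ^ (Fintype.card β - Fintype.card α) := by
  classical
  have e : {y : β → γ // ∀ a, y (g a) = w a} ≃ (↥((Set.range g)ᶜ) → γ) :=
    { toFun := fun y b => y.1 b
      invFun := fun r =>
        ⟨fun b => if h : b ∈ Set.range g then w ((Equiv.ofInjective g hg).symm ⟨b, h⟩)
          else r ⟨b, h⟩, by
          intro a
          have h : g a ∈ Set.range g := ⟨a, rfl⟩
          simp only [dif_pos h]
          congr 1
          have : (⟨g a, h⟩ : Set.range g) = Equiv.ofInjective g hg a := rfl
          rw [this, Equiv.symm_apply_apply]⟩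
      left_inv := by
        intro y
        ext b
        by_cases h : b ∈ Set.range g
        · obtain ⟨a, rfl⟩ := h
          have h : g a ∈ Set.range g := ⟨a, rfl⟩
          simp only [dif_pos h]
          have h2 : (⟨g a, h⟩ : Set.range g) = Equiv.ofInjective g hg a := rfl
          rw [h2, Equiv.symm_apply_apply, y.2 a]
        · simp [h]
      right_inv := by
        intro r
        ext ⟨b, hb⟩
        simp only []
        rw [dif_neg hb] }
  rw [Fintype.card_congr e, Fintype.card_fun, Fintype.card_compl_set,
    Set.card_range_of_injective hg]

section aux
variable {d n m : ℕ} [NeZero n]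

def caFwd (d n m : ℕ) (c : ZMod n → Fin d) :
    (Fin (m + 2) → Fin d) × (Fin (n - m - 2) → Fin d) :=
  (fun k => c ((k.1 : ZMod n) - 1), fun i => c ((m + 1 + i.1 : ℕ) : ZMod n))

def caBwd (d n m : ℕ) [NeZero n]
    (p : (Fin (m + 2) → Fin d) × (Fin (n - m - 2) → Fin d)) : ZMod n → Fin d :=
  fun z => if h : (z + 1).val < m + 2 then p.1 ⟨(z + 1).val, h⟩
    else p.2 ⟨(z + 1).val - (m + 2), by have := ZMod.val_lt (z + 1); omega⟩

lemma caBwd_caFwd (hmn : m + 2 ≤ n) (c : ZMod n → Fin d) :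
    caBwd d n m (caFwd d n m c) = c := by
  funext z
  have hv := ZMod.val_lt (z + 1)
  have hz : ((( z + 1).val : ℕ) : ZMod n) = z + 1 := ZMod.natCast_rightInverse _
  unfold caBwd caFwd
  by_cases h : (z + 1).val < m + 2
  · rw [dif_pos h]
    simp only []
    rw [hz]
    ring_nf
  · rw [dif_neg h]
    simp only []
    have h1 : m + 1 + ((z + 1).val - (m + 2)) = (z + 1).val - 1 := by omega
    rw [h1]
    have h2 : (((z + 1).val - 1 : ℕ) : ZMod n) = z := by
      rw [Nat.cast_sub (by omega), hz, Nat.cast_one]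
      ring
    rw [h2]

lemma caFwd_caBwd (hmn : m + 2 ≤ n)
    (p : (Fin (m + 2) → Fin d) × (Fin (n - m - 2) → Fin d)) :
    caFwd d n m (caBwd d n m p) = p := by
  unfold caFwd caBwd
  refine Prod.ext ?_ ?_
  · funext k
    simp only []
    have hval : (((k.1 : ZMod n) - 1) + 1).val = k.1 := by
      rw [sub_add_cancel, ZMod.val_cast_of_lt (by omega)]
    simp only [hval]
    rw [dif_pos k.2]
  · funext i
    simp only []
    have hi := i.2
    have hcast : ((m + 1 + i.1 : ℕ) : ZMod n) + 1 = ((m + 2 + i.1 : ℕ) : ZMod n) := by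
      push_cast; ring
    have hval : (((m + 1 + i.1 : ℕ) : ZMod n) + 1).val = m + 2 + i.1 := by
      rw [hcast, ZMod.val_cast_of_lt (by omega)]
    simp only [hval]
    rw [dif_neg (by omega)]
    exact congrArg p.2 (Fin.ext (by simp))

end aux

theorem stmt_1 (d n : ℕ) (hd : 2 ≤ d) (hn : 3 ≤ n)
    (f : Fin d → Fin d → Fin d → Fin d)
    (hF : Function.Bijective
      (fun (c : ZMod n → Fin d) (i : ZMod n) => f (c (i - 1)) (c i) (c (i + 1))))
    (m : ℕ) (hm1 : 1 ≤ m) (hm2 : m ≤ n - 2) (w : Fin m → Fin d) :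
    (Finset.univ.filter (fun x : Fin (m + 2) → Fin d =>
      ∀ j : Fin m,
        f (x ⟨j.1, by have := j.isLt; omega⟩)
          (x ⟨j.1 + 1, by have := j.isLt; omega⟩)
          (x ⟨j.1 + 2, by have := j.isLt; omega⟩) = w j)).card = d ^ 2 := by
  classical
  haveI : NeZero n := ⟨by omega⟩
  have hmn : m + 2 ≤ n := by omega
  set F := fun (c : ZMod n → Fin d) (i : ZMod n) => f (c (i - 1)) (c i) (c (i + 1)) with hFdef
  set P : (Fin (m + 2) → Fin d) → Prop := fun x =>
      ∀ j : Fin m,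
        f (x ⟨j.1, by have := j.isLt; omega⟩)
          (x ⟨j.1 + 1, by have := j.isLt; omega⟩)
          (x ⟨j.1 + 2, by have := j.isLt; omega⟩) = w j with hPdef
  set Q : (ZMod n → Fin d) → Prop := fun y => ∀ j : Fin m, y ((j.1 : ℕ) : ZMod n) = w j
    with hQdef
  -- condition transfer
  have hiff : ∀ c : ZMod n → Fin d, Q (F c) ↔ P (caFwd d n m c).1 := by
    intro c
    have hx1 : ∀ j : Fin m, (((j.1 + 1 : ℕ) : ZMod n)) - 1 = ((j.1 : ℕ) : ZMod n) := by
      intro j; push_cast; ring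
    have hx2 : ∀ j : Fin m, (((j.1 + 2 : ℕ) : ZMod n)) - 1 = ((j.1 : ℕ) : ZMod n) + 1 := by
      intro j; push_cast; ring
    show (∀ j : Fin m, f (c (((j.1 : ℕ) : ZMod n) - 1)) (c ((j.1 : ℕ) : ZMod n))
        (c (((j.1 : ℕ) : ZMod n) + 1)) = w j)
      ↔ (∀ j : Fin m, f (c (((j.1 : ℕ) : ZMod n) - 1)) (c (((j.1 + 1 : ℕ) : ZMod n) - 1))
        (c (((j.1 + 2 : ℕ) : ZMod n) - 1)) = w j)
    simp only [hx1, hx2]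
  -- equivalences between subtypes
  have E1 : {c : ZMod n → Fin d // Q (F c)} ≃
      {p : (Fin (m + 2) → Fin d) × (Fin (n - m - 2) → Fin d) // P p.1} :=
    (Equiv.mk (caFwd d n m) (caBwd d n m) (caBwd_caFwd hmn) (caFwd_caBwd hmn)).subtypeEquiv hiff
  have E2 : {p : (Fin (m + 2) → Fin d) × (Fin (n - m - 2) → Fin d) // P p.1}
      ≃ {x : Fin (m + 2) → Fin d // P x} × (Fin (n - m - 2) → Fin d) :=
    ⟨fun p => (⟨p.1.1, p.2⟩, p.1.2), fun q => ⟨(q.1.1, q.2), q.1.2⟩,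
      fun p => rfl, fun q => rfl⟩
  have EF : {c : ZMod n → Fin d // Q (F c)} ≃ {y : ZMod n → Fin d // Q y} :=
    (Equiv.ofBijective F hF).subtypeEquiv (fun c => Iff.rfl)
  -- count of Q-configs
  have hg : Function.Injective (fun j : Fin m => ((j.1 : ℕ) : ZMod n)) := by
    intro a b hab
    have := congrArg ZMod.val hab
    rw [ZMod.val_cast_of_lt (by omega), ZMod.val_cast_of_lt (by omega)] at this
    exact Fin.ext this
  have hQcard : Fintype.card {y : ZMod n → Fin d // Q y} = d ^ (n - m) := by
    have h := card_fixed_on (fun j : Fin m => ((j.1 : ℕ) : ZMod n)) hg w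
    rw [ZMod.card] at h; simp only [Fintype.card_fin] at h
    convert h using 2
  -- put it together
  have hchain : (Finset.univ.filter P).card * d ^ (n - m - 2) = d ^ (n - m) := by
    calc (Finset.univ.filter P).card * d ^ (n - m - 2)
        = Fintype.card {x : Fin (m + 2) → Fin d // P x} * Fintype.card (Fin (n - m - 2) → Fin d) := by
          rw [Fintype.card_subtype, Fintype.card_fun, Fintype.card_fin, Fintype.card_fin]
      _ = Fintype.card ({x : Fin (m + 2) → Fin d // P x} × (Fin (n - m - 2) → Fin d)) := by
          rw [Fintype.card_prod]
      _ = Fintype.card {c : ZMod n → Fin d // Q (F c)} :=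
          (Fintype.card_congr (E1.trans E2)).symm
      _ = Fintype.card {y : ZMod n → Fin d // Q y} := Fintype.card_congr EF
      _ = d ^ (n - m) := hQcard
  have hpow : d ^ (n - m) = d ^ 2 * d ^ (n - m - 2) := by
    rw [← pow_add]
    congr 1
    omega
  rw [hpow] at hchain
  have hpos : 0 < d ^ (n - m - 2) := Nat.pow_pos (by omega)
  exact Nat.eq_of_mul_eq_mul_right hpos hchain
end

section
/- Let d = 3 and define the local rule f : Fin 3 → Fin 3 → Fin 3 → Fin 3 by f x y z = h y z, where h 0 0 = 0, h 0 1 = 1, h 0 2 = 0, h 1 0 = 1, h 1 1 = 2, h 1 2 = 2, h 2 0 = 2, h 2 1 = 0, h 2 2 = 1 (the 3-state CA rule 102221010102221010102221010). Then for every odd n ≥ 3, the global map F of the n-cell periodic-boundary CA is bijective. -/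
def h7 : Fin 3 → Fin 3 → Fin 3 :=
  ![![0, 1, 0], ![1, 2, 2], ![2, 0, 1]]

def f7 : Fin 3 → Fin 3 → Fin 3 → Fin 3 := fun _ y z => h7 y z

/-
For fixed `z` the map `y ↦ h7 y z` is a permutation of `Fin 3` (namely `y`, `y + 1`, `-y` for
`z = 0, 1, 2`). So if `F c = F c'`, agreement of `c` and `c'` at `i + 1` forces agreement at `i`,
and a single agreement propagates around the cycle. If instead `c i ≠ c' i` everywhere, the pairs
`(c i, c' i)` either all have sum `1`, and then `c` alternates between `0` and `1`, or all have sum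
`0` or `2`, and then the sum alternates between these two values: impossible on an odd cycle.
-/

namespace ZMod

variable {n : ℕ}

theorem forall_of_succ_imp [NeZero n] {S : ZMod n → Prop} (hS : ∀ i, S (i + 1) → S i)
    {j : ZMod n} (hj : S j) (i : ZMod n) : S i := by
  have hback : ∀ k : ℕ, S (j - k) := by
    intro k
    induction k with
    | zero => simpa using hj
    | succ k ih => exact hS _ (by rwa [Nat.cast_succ, sub_add_eq_sub_sub, sub_add_cancel])
  simpa using hback (j - i).val

theorem even_of_succ_iff_not {P : ZMod n → Prop} (hP : ∀ i, P (i + 1) ↔ ¬ P i) : Even n := by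
  have hk : ∀ k : ℕ, P k ↔ (P 0 ↔ Even k) := by
    intro k
    induction k with
    | zero => simp
    | succ k ih => rw [Nat.cast_succ, hP, ih, Nat.even_add_one]; tauto
  have := hk n
  rw [natCast_self] at this
  tauto

end ZMod

theorem h7_left_injective (z : Fin 3) : Function.Injective (h7 · z) := by
  revert z; decide

section H7

variable {y y' z z' : Fin 3}

theorem add_ne_one_of_h7_eq (h : h7 y z = h7 y' z') (hy : y ≠ y') (hz : z + z' ≠ 1) :
    y + y' ≠ 1 := by
  revert y y' z z'; decide

theorem add_eq_zero_iff_of_h7_eq (h : h7 y z = h7 y' z') (hy : y ≠ y') (hy1 : y + y' ≠ 1)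
    (hz1 : z + z' ≠ 1) : z + z' = 0 ↔ ¬ y + y' = 0 := by
  revert y y' z z'; decide

theorem eq_zero_iff_of_h7_eq (h : h7 y z = h7 y' z') (hy : y ≠ y') (hy1 : y + y' = 1)
    (hz1 : z + z' = 1) : z = 0 ↔ ¬ y = 0 := by
  revert y y' z z'; decide

end H7

theorem stmt_7_general (n : ℕ) (hodd : Odd n) :
    Function.Bijective
      (fun (c : ZMod n → Fin 3) (i : ZMod n) => f7 (c (i - 1)) (c i) (c (i + 1))) := by
  have : NeZero n := ⟨hodd.pos.ne'⟩
  rw [← Finite.injective_iff_bijective]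
  intro c c' hcc'
  have key (i : ZMod n) : h7 (c i) (c (i + 1)) = h7 (c' i) (c' (i + 1)) := congrFun hcc' i
  by_cases hagree : ∃ j, c j = c' j
  · obtain ⟨j, hj⟩ := hagree
    funext i
    refine ZMod.forall_of_succ_imp (S := fun i => c i = c' i)
      (fun i hi => h7_left_injective (c (i + 1)) ?_) hj i
    simpa only [hi] using key i
  · push Not at hagree
    exfalso
    refine (Nat.not_even_iff_odd.2 hodd) ?_
    by_cases hsum : ∃ j, c j + c' j ≠ 1
    · obtain ⟨j, hj⟩ := hsum
      have hsum' := ZMod.forall_of_succ_imp (S := fun i => c i + c' i ≠ 1)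
        (fun i => add_ne_one_of_h7_eq (key i) (hagree i)) hj
      exact ZMod.even_of_succ_iff_not (P := fun i => c i + c' i = 0) fun i =>
        add_eq_zero_iff_of_h7_eq (key i) (hagree i) (hsum' i) (hsum' (i + 1))
    · push Not at hsum
      exact ZMod.even_of_succ_iff_not (P := fun i => c i = 0) fun i =>
        eq_zero_iff_of_h7_eq (key i) (hagree i) (hsum i) (hsum (i + 1))

theorem stmt_7 (n : ℕ) (hn : 3 ≤ n) (hodd : Odd n) :
    Function.Bijective
      (fun (c : ZMod n → Fin 3) (i : ZMod n) => f7 (c (i - 1)) (c i) (c (i + 1))) :=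
  stmt_7_general n hodd
end
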